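/- Fix a permutation π of V, J ∈ V, and an integer m ≥ 1. Suppose a^J_I = 0 for every I ∈ V with Hamming weight |I| > m. Then every coefficient a^J_g is a dyadic rational with denominator 2^{m−1}: for every g ∈ V there exists an integer z with a^J_g = z / 2^{m−1}. -/

import Mathlib

open Finset

/-- Hamming weight of an n-bit vector. -/
def wt {n : ℕ} (v : Fin n → ZMod 2) : ℕ :=
  (Finset.univ.filter (fun i => v i = 1)).card

/-- The sign (-1)^{u·v} ∈ ℝ. -/
noncomputable def sgn {n : ℕ} (u v : Fin n → ZMod 2) : ℝ :=
  if (∑ i, u i * v i) = (1 : ZMod 2) then -1 else 1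

/-- Fourier coefficient a^J_I, for a permutation π of V = Fin n → ZMod 2. -/
noncomputable def fc {n : ℕ} (π : Equiv.Perm (Fin n → ZMod 2))
    (J I : Fin n → ZMod 2) : ℝ :=
  (1 / 2 ^ n) * ∑ x : Fin n → ZMod 2, sgn I x * sgn (π x) J

/-!
Write the `±1`-valued function `f x = (-1)^{π(x)·J}` as `f = 1 - 2b` with `b` integer-valued.
If an integer-valued `b` has Fourier degree `≤ k`, its coefficients lie in `2^{-k} ℤ`, by
induction on `k`: the derivative `x ↦ b(x[i ↦ 0]) - b(x[i ↦ 1])` is again integer-valued, has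
degree `≤ k - 1`, and its coefficient at `S + eᵢ` is twice that of `b` at `S` whenever
`Sᵢ = 1`. This covers every `S ≠ 0`, and Fourier inversion at `0`, `b(0) = ∑_S b̂(S)`, covers
`S = 0`. Since `f` has degree `≤ m ≤ (m - 1) + 1`, the factor `2` in `f = 1 - 2b` gives
`f̂(S) ∈ 2^{-(m-1)} ℤ`.
-/

lemma zmod2_eq_zero_or_eq_one (a : ZMod 2) : a = 0 ∨ a = 1 := by
  revert a; decide

lemma zmod2_eq_one_iff_ne_zero {a : ZMod 2} : a = 1 ↔ a ≠ 0 := by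
  revert a; decide

lemma zmod2_sign_add (a b : ZMod 2) :
    (if a + b = 1 then (-1 : ℝ) else 1)
      = (if a = 1 then -1 else 1) * (if b = 1 then -1 else 1) := by
  obtain rfl | rfl := zmod2_eq_zero_or_eq_one a <;>
    obtain rfl | rfl := zmod2_eq_zero_or_eq_one b <;>
    simp [CharTwo.add_self_eq_zero]

noncomputable abbrev dyadic (m : ℕ) : AddSubgroup ℝ := AddSubgroup.zmultiples ((2 : ℝ) ^ m)⁻¹

lemma mem_dyadic {m : ℕ} {a : ℝ} : a ∈ dyadic m ↔ ∃ z : ℤ, a = z / 2 ^ m := by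
  simp [AddSubgroup.mem_zmultiples_iff, div_eq_mul_inv, eq_comm]

lemma intCast_mem_dyadic (k : ℤ) (m : ℕ) : (k : ℝ) ∈ dyadic m :=
  mem_dyadic.2 ⟨k * 2 ^ m, by push_cast; field_simp⟩

lemma two_mul_mem_dyadic_iff {m : ℕ} {a : ℝ} : 2 * a ∈ dyadic m ↔ a ∈ dyadic (m + 1) := by
  simp only [mem_dyadic, pow_succ]
  refine exists_congr fun z => ?_
  constructor <;> intro h <;> field_simp at h ⊢ <;> linarith

section Walsh

variable {n : ℕ}

lemma add_add_cancel_right (u v : Fin n → ZMod 2) : u + v + v = u := by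
  funext i
  simp [add_assoc, CharTwo.add_self_eq_zero]

lemma add_single_one_eq_update (x : Fin n → ZMod 2) (i : Fin n) :
    x + Pi.single i 1 = Function.update x i (x i + 1) := by
  funext j
  obtain rfl | hj := eq_or_ne j i <;> simp [*]

lemma wt_pos {S : Fin n → ZMod 2} (hS : S ≠ 0) : 0 < wt S := by
  obtain ⟨i, hi⟩ := Function.ne_iff.1 hS
  exact card_pos.2 ⟨i, by simpa [zmod2_eq_one_iff_ne_zero] using hi⟩

lemma wt_add_single {S : Fin n → ZMod 2} {i : Fin n} (hi : S i = 0) :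
    wt (S + Pi.single i 1) = wt S + 1 := by
  have hsupp : univ.filter (fun j => (S + Pi.single i 1 : Fin n → ZMod 2) j = 1)
      = insert i (univ.filter (fun j => S j = 1)) := by
    ext j
    obtain rfl | hj := eq_or_ne j i <;> simp [*]
  rw [wt, hsupp, card_insert_of_notMem (by simp [hi]), wt]

lemma sgn_def (u v : Fin n → ZMod 2) : sgn u v = if u ⬝ᵥ v = 1 then -1 else 1 := rfl

lemma sgn_eq_one_or_neg_one (u v : Fin n → ZMod 2) : sgn u v = 1 ∨ sgn u v = -1 := by
  rw [sgn_def]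
  split_ifs <;> simp

lemma sgn_comm (u v : Fin n → ZMod 2) : sgn u v = sgn v u := by
  rw [sgn_def, sgn_def, dotProduct_comm]

lemma sgn_add_right (u x y : Fin n → ZMod 2) : sgn u (x + y) = sgn u x * sgn u y := by
  rw [sgn_def, dotProduct_add, zmod2_sign_add]
  rfl

lemma sgn_add_left (u v x : Fin n → ZMod 2) : sgn (u + v) x = sgn u x * sgn v x := by
  rw [sgn_comm, sgn_add_right, sgn_comm x, sgn_comm x]

lemma sgn_zero_right (u : Fin n → ZMod 2) : sgn u 0 = 1 := by
  simp [sgn_def]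

lemma sgn_single_right (u : Fin n → ZMod 2) (i : Fin n) :
    sgn u (Pi.single i 1) = if u i = 1 then -1 else 1 := by
  rw [sgn_def, dotProduct_single_one]

lemma sgn_single_left (i : Fin n) (x : Fin n → ZMod 2) :
    sgn (Pi.single i 1) x = if x i = 1 then -1 else 1 := by
  rw [sgn_comm, sgn_single_right]

lemma sum_sgn (u : Fin n → ZMod 2) :
    ∑ x, sgn u x = if u = 0 then (2 : ℝ) ^ n else 0 := by
  split_ifs with hu
  · simp [hu, sgn_comm 0, sgn_zero_right]
  · obtain ⟨i, hi⟩ := Function.ne_iff.1 hu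
    have hshift := Equiv.sum_comp (Equiv.addRight (Pi.single i 1)) (sgn u)
    simp only [Equiv.coe_addRight, sgn_add_right, sgn_single_right,
      zmod2_eq_one_iff_ne_zero.2 hi, ite_true, mul_neg_one, sum_neg_distrib] at hshift
    linarith

noncomputable def walsh (f : (Fin n → ZMod 2) → ℝ) (S : Fin n → ZMod 2) : ℝ :=
  1 / 2 ^ n * ∑ x, sgn S x * f x

lemma fc_eq_walsh (π : Equiv.Perm (Fin n → ZMod 2)) (J : Fin n → ZMod 2) :
    fc π J = walsh (fun x => sgn (π x) J) := rfl

lemma walsh_sub (f g : (Fin n → ZMod 2) → ℝ) (S : Fin n → ZMod 2) :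
    walsh (fun x => f x - g x) S = walsh f S - walsh g S := by
  simp only [walsh, mul_sub, sum_sub_distrib]

lemma walsh_const_mul (c : ℝ) (f : (Fin n → ZMod 2) → ℝ) (S : Fin n → ZMod 2) :
    walsh (fun x => c * f x) S = c * walsh f S := by
  simp only [walsh, mul_sum]
  congr 1; ext x; ring

lemma walsh_const (c : ℝ) (S : Fin n → ZMod 2) :
    walsh (fun _ => c) S = if S = 0 then c else 0 := by
  rw [walsh, ← sum_mul, sum_sgn]
  split_ifs <;> simp

lemma walsh_add_right (f : (Fin n → ZMod 2) → ℝ) (v S : Fin n → ZMod 2) :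
    walsh (fun x => f (x + v)) S = sgn S v * walsh f S := by
  have hshift : ∑ x, sgn S x * f (x + v) = ∑ y, sgn S (y + v) * f y := by
    simp_rw [← Equiv.sum_comp (Equiv.addRight v) (fun y => sgn S (y + v) * f y),
      Equiv.coe_addRight, add_add_cancel_right]
  simp only [walsh, hshift, sgn_add_right, mul_sum]
  congr 1; ext x; ring

lemma walsh_sgn_mul (f : (Fin n → ZMod 2) → ℝ) (S T : Fin n → ZMod 2) :
    walsh (fun x => sgn T x * f x) S = walsh f (S + T) := by
  simp only [walsh, sgn_add_left, mul_assoc]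

lemma apply_zero_eq_sum_walsh (f : (Fin n → ZMod 2) → ℝ) : f 0 = ∑ S, walsh f S := by
  simp only [walsh, ← mul_sum]
  rw [sum_comm]
  simp only [← sum_mul, sgn_comm _, sum_sgn, ite_mul, zero_mul, sum_ite_eq']
  simp

lemma update_zero_sub_update_one (g : (Fin n → ZMod 2) → ℝ) (i : Fin n)
    (x : Fin n → ZMod 2) :
    g (Function.update x i 0) - g (Function.update x i 1)
      = sgn (Pi.single i 1) x * (g x - g (x + Pi.single i 1)) := by
  rw [sgn_single_left, add_single_one_eq_update]
  obtain h | h := zmod2_eq_zero_or_eq_one (x i)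
  · have hx : Function.update x i 0 = x := h ▸ Function.update_eq_self i x
    simp [h, hx]
  · have hx : Function.update x i 1 = x := h ▸ Function.update_eq_self i x
    simp [h, hx, CharTwo.add_self_eq_zero]

lemma walsh_update_zero_sub_update_one (g : (Fin n → ZMod 2) → ℝ) (i : Fin n)
    (T : Fin n → ZMod 2) :
    walsh (fun x => g (Function.update x i 0) - g (Function.update x i 1)) T
      = if T i = 1 then 0 else 2 * walsh g (T + Pi.single i 1) := by
  simp only [update_zero_sub_update_one, walsh_sgn_mul, walsh_sub, walsh_add_right,
    sgn_single_right, Pi.add_apply, Pi.single_eq_same]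
  obtain h | h := zmod2_eq_zero_or_eq_one (T i) <;>
    simp [h, CharTwo.add_self_eq_zero, two_mul]

lemma walsh_mem_of_forall_ne_zero {D : AddSubgroup ℝ} {f : (Fin n → ZMod 2) → ℝ}
    (h0 : f 0 ∈ D) (h : ∀ S ≠ 0, walsh f S ∈ D) (S : Fin n → ZMod 2) : walsh f S ∈ D := by
  obtain rfl | hS := eq_or_ne S 0
  · have hinv := apply_zero_eq_sum_walsh f
    rw [← add_sum_erase _ _ (mem_univ 0)] at hinv
    rw [eq_sub_of_add_eq hinv.symm]
    exact D.sub_mem h0 (D.sum_mem fun S hS => h S (ne_of_mem_erase hS))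
  · exact h S hS

theorem walsh_mem_dyadic_of_degree_le (m : ℕ) (g : (Fin n → ZMod 2) → ℤ)
    (hg : ∀ S, m < wt S → walsh (fun x => (g x : ℝ)) S = 0) (S : Fin n → ZMod 2) :
    walsh (fun x => (g x : ℝ)) S ∈ dyadic m := by
  refine walsh_mem_of_forall_ne_zero (intCast_mem_dyadic _ _) (fun S hS => ?_) S
  induction m generalizing g S with
  | zero =>
    rw [hg S (wt_pos hS)]
    exact zero_mem _
  | succ m ih =>
    obtain ⟨i, hi⟩ := Function.ne_iff.1 hS
    rw [Pi.zero_apply, ← zmod2_eq_one_iff_ne_zero] at hi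
    set dg : (Fin n → ZMod 2) → ℤ :=
      fun x => g (Function.update x i 0) - g (Function.update x i 1)
    have hwalsh (T : Fin n → ZMod 2) : walsh (fun x => (dg x : ℝ)) T
        = if T i = 1 then 0 else 2 * walsh (fun x => (g x : ℝ)) (T + Pi.single i 1) := by
      simp only [dg, Int.cast_sub]
      exact walsh_update_zero_sub_update_one (fun x => (g x : ℝ)) i T
    have hdg : ∀ T, m < wt T → walsh (fun x => (dg x : ℝ)) T = 0 := by
      intro T hT
      rw [hwalsh]
      split_ifs with hTi
      · rfl
      · rw [zmod2_eq_one_iff_ne_zero, not_not] at hTi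
        rw [hg _ (by rw [wt_add_single hTi]; omega), mul_zero]
    have hdg_mem := walsh_mem_of_forall_ne_zero (intCast_mem_dyadic _ _) (ih dg hdg)
      (S + Pi.single i 1)
    rwa [hwalsh, if_neg (by simp [hi]), add_add_cancel_right, two_mul_mem_dyadic_iff] at hdg_mem

theorem walsh_mem_dyadic_of_sign (f : (Fin n → ZMod 2) → ℝ)
    (hf : ∀ x, f x = 1 ∨ f x = -1) (m : ℕ) (hdeg : ∀ S, m + 1 < wt S → walsh f S = 0)
    (S : Fin n → ZMod 2) : walsh f S ∈ dyadic m := by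
  classical
  set b : (Fin n → ZMod 2) → ℤ := fun x => if f x = 1 then 0 else 1
  have hfb : f = fun x => 1 - 2 * (b x : ℝ) := by
    funext x
    rcases hf x with h | h <;> norm_num [b, h]
  have hwalsh (S : Fin n → ZMod 2) :
      walsh f S = (if S = 0 then 1 else 0) - 2 * walsh (fun x => (b x : ℝ)) S := by
    rw [hfb, walsh_sub, walsh_const, walsh_const_mul]
  have hb : ∀ S, m + 1 < wt S → walsh (fun x => (b x : ℝ)) S = 0 := by
    intro S hS
    have hS0 : S ≠ 0 := by rintro rfl; simp [wt] at hS
    have hfS := hwalsh S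
    rw [hdeg S hS, if_neg hS0] at hfS
    linarith
  rw [hwalsh]
  refine sub_mem ?_ (two_mul_mem_dyadic_iff.2 (walsh_mem_dyadic_of_degree_le _ b hb S))
  split_ifs
  · exact_mod_cast intCast_mem_dyadic 1 m
  · exact zero_mem _

end Walsh

theorem fc_dyadic_general {n : ℕ} (π : Equiv.Perm (Fin n → ZMod 2))
    (J : Fin n → ZMod 2) (m : ℕ)
    (hloc : ∀ I : Fin n → ZMod 2, m < wt I → fc π J I = 0) :
    ∀ g : Fin n → ZMod 2, ∃ z : ℤ, fc π J g = (z : ℝ) / 2 ^ (m - 1) := by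
  intro g
  rw [fc_eq_walsh, ← mem_dyadic]
  exact walsh_mem_dyadic_of_sign _ (fun x => sgn_eq_one_or_neg_one _ _) (m - 1)
    (fun I hI => hloc I (by omega)) g

/-- If all Fourier coefficients of J vanish above locality m, then every coefficient
a^J_g is a dyadic rational with denominator 2^(m-1). -/
theorem fc_dyadic {n : ℕ} (hn : 1 ≤ n) (π : Equiv.Perm (Fin n → ZMod 2))
    (J : Fin n → ZMod 2) (m : ℕ) (hm : 1 ≤ m)
    (hloc : ∀ I : Fin n → ZMod 2, m < wt I → fc π J I = 0) :
    ∀ g : Fin n → ZMod 2, ∃ z : ℤ, fc π J g = (z : ℝ) / 2 ^ (m - 1) :=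
  fc_dyadic_general π J m hloc
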